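/- arXiv:math/0504385 — 4 statements merged into one kernel-verified Lean document; each statement's English description precedes it below -/
import Mathlib

section
/- Let (X, d) be a metric space equipped with a Borel measure μ, let α ≥ 1 and D > 0 be real numbers. Then for all y, z ∈ X the (possibly infinite) Lebesgue integrals satisfy: ∫_X exp(−d(y,w)^α/D)·exp(−d(w,z)^α/D) dμ(w) ≤ exp(−d(y,z)^α/(2^α·D)) · ( ∫_X exp(−d(y,w)^α/D) dμ(w) + ∫_X exp(−d(w,z)^α/D) dμ(w) ). -/
open MeasureTheory Real

lemma key_pointwise (α D u v t : ℝ) (hα : 1 ≤ α) (hD : 0 < D)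
    (hu : 0 ≤ u) (hv : 0 ≤ v) (ht : 0 ≤ t) (htri : t ≤ u + v) :
    Real.exp (-(u ^ α) / D) * Real.exp (-(v ^ α) / D) ≤
      Real.exp (-(t ^ α) / ((2 : ℝ) ^ α * D)) *
        (Real.exp (-(u ^ α) / D) + Real.exp (-(v ^ α) / D)) := by
  have hα0 : 0 ≤ α := le_trans zero_le_one hα
  have hkey : ∀ a b : ℝ, 0 ≤ a → t / 2 ≤ a →
      Real.exp (-(a ^ α) / D) * Real.exp (-(b ^ α) / D) ≤
        Real.exp (-(t ^ α) / ((2 : ℝ) ^ α * D)) *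
          (Real.exp (-(a ^ α) / D) + Real.exp (-(b ^ α) / D)) := by
    intro a b ha hta
    have h1 : (t / 2) ^ α ≤ a ^ α :=
      Real.rpow_le_rpow (by positivity) hta hα0
    have h2 : (t / 2) ^ α = t ^ α / (2 : ℝ) ^ α :=
      Real.div_rpow ht (by norm_num) α
    have h3 : Real.exp (-(a ^ α) / D) ≤ Real.exp (-(t ^ α) / ((2 : ℝ) ^ α * D)) := by
      apply Real.exp_le_exp.2
      rw [div_le_div_iff₀ hD (by positivity)]
      have h2' : 0 < (2 : ℝ) ^ α := Real.rpow_pos_of_pos (by norm_num) α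
      have h1' : t ^ α ≤ a ^ α * 2 ^ α := (div_le_iff₀ h2').1 (h2 ▸ h1)
      nlinarith [mul_le_mul_of_nonneg_right h1' hD.le]
    calc Real.exp (-(a ^ α) / D) * Real.exp (-(b ^ α) / D)
        ≤ Real.exp (-(t ^ α) / ((2 : ℝ) ^ α * D)) * Real.exp (-(b ^ α) / D) := by
          apply mul_le_mul_of_nonneg_right h3 (Real.exp_nonneg _)
      _ ≤ _ := by
          apply mul_le_mul_of_nonneg_left _ (Real.exp_nonneg _)
          nlinarith [Real.exp_nonneg (-(a ^ α) / D)]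
  rcases le_or_gt (t / 2) u with h | h
  · exact hkey u v hu h
  · have : t / 2 ≤ v := by linarith
    have := hkey v u hv this
    calc Real.exp (-(u ^ α) / D) * Real.exp (-(v ^ α) / D)
        = Real.exp (-(v ^ α) / D) * Real.exp (-(u ^ α) / D) := by ring
      _ ≤ Real.exp (-(t ^ α) / ((2 : ℝ) ^ α * D)) *
            (Real.exp (-(v ^ α) / D) + Real.exp (-(u ^ α) / D)) := this
      _ = Real.exp (-(t ^ α) / ((2 : ℝ) ^ α * D)) *
            (Real.exp (-(u ^ α) / D) + Real.exp (-(v ^ α) / D)) := by ring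

/-- For a metric space `(X, d)` with a Borel measure `μ`, reals `α ≥ 1` and `D > 0`,
and all `y z : X`, the (possibly infinite) Lebesgue integral of the product
`exp(−d(y,w)^α/D)·exp(−d(w,z)^α/D)` over `w` is at most
`exp(−d(y,z)^α/(2^α·D))` times the sum of the integrals of the two factors. -/
theorem lintegral_exp_mul_exp_le {X : Type*} [MetricSpace X] [MeasurableSpace X]
    [BorelSpace X] (μ : Measure X) (α D : ℝ) (hα : 1 ≤ α) (hD : 0 < D) (y z : X) :
    ∫⁻ w, ENNReal.ofReal (Real.exp (-(dist y w ^ α) / D) * Real.exp (-(dist w z ^ α) / D)) ∂μ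
      ≤ ENNReal.ofReal (Real.exp (-(dist y z ^ α) / ((2 : ℝ) ^ α * D))) *
        ((∫⁻ w, ENNReal.ofReal (Real.exp (-(dist y w ^ α) / D)) ∂μ) +
         (∫⁻ w, ENNReal.ofReal (Real.exp (-(dist w z ^ α) / D)) ∂μ)) := by
  set k := Real.exp (-(dist y z ^ α) / ((2 : ℝ) ^ α * D)) with hk
  have hcont : ∀ x : X, Continuous fun w : X => Real.exp (-(dist x w ^ α) / D) := by
    intro x
    exact Real.continuous_exp.comp
      ((((continuous_const.dist continuous_id).rpow_const
        (fun w => Or.inr (le_trans zero_le_one hα))).neg).div_const D)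
  have hcont' : Continuous fun w : X => Real.exp (-(dist w z ^ α) / D) := by
    exact Real.continuous_exp.comp
      ((((continuous_id.dist continuous_const).rpow_const
        (fun w => Or.inr (le_trans zero_le_one hα))).neg).div_const D)
  have hmeas1 : Measurable fun w => ENNReal.ofReal (Real.exp (-(dist y w ^ α) / D)) :=
    ENNReal.measurable_ofReal.comp (hcont y).measurable
  have hptwise : ∀ w : X,
      ENNReal.ofReal (Real.exp (-(dist y w ^ α) / D) * Real.exp (-(dist w z ^ α) / D)) ≤
        ENNReal.ofReal k *
          (ENNReal.ofReal (Real.exp (-(dist y w ^ α) / D)) +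
           ENNReal.ofReal (Real.exp (-(dist w z ^ α) / D))) := by
    intro w
    have h := key_pointwise α D (dist y w) (dist w z) (dist y z) hα hD
      dist_nonneg dist_nonneg dist_nonneg (dist_triangle y w z)
    calc ENNReal.ofReal (Real.exp (-(dist y w ^ α) / D) * Real.exp (-(dist w z ^ α) / D))
        ≤ ENNReal.ofReal (k * (Real.exp (-(dist y w ^ α) / D) +
            Real.exp (-(dist w z ^ α) / D))) := ENNReal.ofReal_le_ofReal h
      _ = ENNReal.ofReal k *
          (ENNReal.ofReal (Real.exp (-(dist y w ^ α) / D)) +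
           ENNReal.ofReal (Real.exp (-(dist w z ^ α) / D))) := by
          rw [ENNReal.ofReal_mul (Real.exp_nonneg _),
            ENNReal.ofReal_add (Real.exp_nonneg _) (Real.exp_nonneg _)]
  calc ∫⁻ w, ENNReal.ofReal (Real.exp (-(dist y w ^ α) / D) *
        Real.exp (-(dist w z ^ α) / D)) ∂μ
      ≤ ∫⁻ w, ENNReal.ofReal k *
          (ENNReal.ofReal (Real.exp (-(dist y w ^ α) / D)) +
           ENNReal.ofReal (Real.exp (-(dist w z ^ α) / D))) ∂μ :=
        lintegral_mono hptwise
    _ = ENNReal.ofReal k *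
        ∫⁻ w, (ENNReal.ofReal (Real.exp (-(dist y w ^ α) / D)) +
           ENNReal.ofReal (Real.exp (-(dist w z ^ α) / D))) ∂μ :=
        lintegral_const_mul' _ _ ENNReal.ofReal_ne_top
    _ = ENNReal.ofReal k *
        ((∫⁻ w, ENNReal.ofReal (Real.exp (-(dist y w ^ α) / D)) ∂μ) +
         (∫⁻ w, ENNReal.ofReal (Real.exp (-(dist w z ^ α) / D)) ∂μ)) := by
        rw [lintegral_add_left hmeas1]
end

section
/- Let (X, d) be a metric space with a Borel measure μ satisfying a uniform exponential volume growth bound: there are A, B > 0 with μ(closed ball of center y and radius r) ≤ A·exp(B·r) for all y ∈ X, r ≥ 0. Let α > 1, and let K₁, K₂ : X × X → ℂ be measurable kernels for which there are constants C₁, C₂, D₁, D₂ > 0 with |K₁(y,w)| ≤ C₁·exp(−d(y,w)^α/C₂) and |K₂(w,z)| ≤ D₁·exp(−d(w,z)^α/D₂) for all points. Then there exist constants C₃, C₄ > 0 such that for all y, z ∈ X: ∫_X |K₁(y,w)|·|K₂(w,z)| dμ(w) ≤ C₃·exp(−d(y,z)^α/C₄), and one may take C₄ = 2^α·(C₂ +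 D₂). -/
open MeasureTheory Real

/-- Key exponent inequality. -/
lemma aux_key_ineq {α C₂ D₂ d1 d2 d : ℝ} (hα : 1 ≤ α) (hC₂ : 0 < C₂) (hD₂ : 0 < D₂)
    (h1 : 0 ≤ d1) (h2 : 0 ≤ d2) (hd : 0 ≤ d) (htri : d ≤ d1 + d2) :
    d ^ α / ((2:ℝ) ^ α * (C₂ + D₂)) + (min d1 d2) ^ α / (C₂ + D₂)
      ≤ d1 ^ α / C₂ + d2 ^ α / D₂ := by
  have hα0 : (0:ℝ) ≤ α := by linarith
  have hM : 0 < C₂ + D₂ := by linarith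
  have hmax : d / 2 ≤ max d1 d2 := by
    have h1' := le_max_left d1 d2
    have h2' := le_max_right d1 d2
    linarith
  have hsum : (d/2) ^ α + (min d1 d2) ^ α ≤ d1 ^ α + d2 ^ α := by
    have hle := Real.rpow_le_rpow (by positivity : (0:ℝ) ≤ d/2) hmax hα0
    rcases le_total d1 d2 with h | h
    · rw [min_eq_left h]; rw [max_eq_right h] at hle; linarith
    · rw [min_eq_right h]; rw [max_eq_left h] at hle; linarith
  calc d ^ α / ((2:ℝ) ^ α * (C₂ + D₂)) + (min d1 d2) ^ α / (C₂ + D₂)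
      = ((d/2) ^ α + (min d1 d2) ^ α) / (C₂ + D₂) := by
        rw [Real.div_rpow hd (by norm_num), add_div, div_div]
    _ ≤ (d1 ^ α + d2 ^ α) / (C₂ + D₂) := by gcongr
    _ = d1 ^ α / (C₂ + D₂) + d2 ^ α / (C₂ + D₂) := add_div _ _ _
    _ ≤ d1 ^ α / C₂ + d2 ^ α / D₂ := by
        gcongr <;> first
          | exact Real.rpow_nonneg h1 α
          | exact Real.rpow_nonneg h2 α
          | positivity
          | linarith

lemma aux_summable {α B M : ℝ} (hα : 1 < α) (hB : 0 < B) (hM : 0 < M) :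
    Summable (fun n : ℕ => Real.exp (B * (n+1) - (n:ℝ) ^ α / M)) := by
  obtain ⟨N, hN⟩ := Filter.eventually_atTop.mp
    (((tendsto_rpow_atTop (by linarith : (0:ℝ) < α - 1)).comp
      tendsto_natCast_atTop_atTop).eventually_ge_atTop (M * (2*B+1)))
  rw [← summable_nat_add_iff (N+1)]
  refine Summable.of_nonneg_of_le (f := fun n => Real.exp (-1) ^ (n + (N+1)))
    (fun n => (Real.exp_pos _).le) (fun n => ?_) ?_
  · 
    set m : ℕ := n + (N + 1) with hm
    have hm1 : (1:ℝ) ≤ (m:ℝ) := by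
      have : (1:ℕ) ≤ m := by omega
      exact_mod_cast this
    have hNm : M * (2*B+1) ≤ (m:ℝ) ^ (α-1) := hN m (by omega)
    have hkey : M * ((2*B+1) * (m:ℝ)) ≤ (m:ℝ) ^ α := by
      calc M * ((2*B+1) * (m:ℝ)) = (M * (2*B+1)) * (m:ℝ) := by ring
        _ ≤ (m:ℝ) ^ (α-1) * (m:ℝ) := by
            apply mul_le_mul_of_nonneg_right hNm (by linarith)
        _ = (m:ℝ) ^ α := by
            rw [← Real.rpow_add_one (by linarith : (m:ℝ) ≠ 0)]
            ring_nf
    have hdiv : (2*B+1) * (m:ℝ) ≤ (m:ℝ) ^ α / M := by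
      rw [le_div_iff₀ hM]; linarith
    have hexp : B * ((m:ℝ)+1) - (m:ℝ) ^ α / M ≤ -(m:ℝ) := by nlinarith
    calc Real.exp (B * ((m:ℝ)+1) - (m:ℝ) ^ α / M) ≤ Real.exp (-(m:ℝ)) :=
          Real.exp_le_exp.mpr hexp
      _ = Real.exp (-1) ^ m := by
          rw [← Real.exp_nat_mul]; ring_nf
  · have hgeo : Summable (fun n : ℕ => Real.exp (-1) ^ n) :=
      summable_geometric_of_lt_one (Real.exp_pos _).le
        (Real.exp_lt_one_iff.mpr (by norm_num))
    have := (summable_nat_add_iff (N+1)).mpr hgeo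
    exact this

/-- Composition of super-exponentially decaying kernels: on a metric measure space with
uniform exponential volume growth, if `K₁` and `K₂` are measurable kernels bounded by
`C₁·exp(−d^α/C₂)` and `D₁·exp(−d^α/D₂)` respectively (with `α > 1`), then the composed
integral `∫ |K₁(y,w)|·|K₂(w,z)| dμ(w)` is bounded by `C₃·exp(−d(y,z)^α/C₄)` with
`C₄ = 2^α·(C₂ + D₂)`. -/
theorem lintegral_comp_superexp_kernels {X : Type*} [MetricSpace X]
    [MeasurableSpace X] [BorelSpace X] (μ : Measure X) (A B : ℝ) (hA : 0 < A) (hB : 0 < B)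
    (hgrowth : ∀ (y : X) (r : ℝ), 0 ≤ r →
      μ (Metric.closedBall y r) ≤ ENNReal.ofReal (A * Real.exp (B * r)))
    (α : ℝ) (hα : 1 < α) (K₁ K₂ : X × X → ℂ) (hK₁ : Measurable K₁) (hK₂ : Measurable K₂)
    (C₁ C₂ D₁ D₂ : ℝ) (hC₁ : 0 < C₁) (hC₂ : 0 < C₂) (hD₁ : 0 < D₁) (hD₂ : 0 < D₂)
    (hbd₁ : ∀ y w : X, ‖K₁ (y, w)‖ ≤ C₁ * Real.exp (-(dist y w ^ α) / C₂))
    (hbd₂ : ∀ w z : X, ‖K₂ (w, z)‖ ≤ D₁ * Real.exp (-(dist w z ^ α) / D₂)) :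
    ∃ C₃ : ℝ, 0 < C₃ ∧ ∀ y z : X,
      ∫⁻ w, ENNReal.ofReal (‖K₁ (y, w)‖ * ‖K₂ (w, z)‖) ∂μ
        ≤ ENNReal.ofReal (C₃ * Real.exp (-(dist y z ^ α) / ((2 : ℝ) ^ α * (C₂ + D₂)))) := by
  set M : ℝ := C₂ + D₂ with hMdef
  have hM : 0 < M := by positivity
  set c : ℕ → ℝ := fun n => Real.exp (-((n:ℝ) ^ α) / M) * (2 * (A * Real.exp (B * ((n:ℝ)+1))))
    with hcdef
  have hcnn : ∀ n, 0 ≤ c n := fun n => by positivity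
  have hcsum : Summable c := by
    refine Summable.congr ((aux_summable hα hB hM).mul_left (2*A)) fun n => ?_
    show (2*A) * Real.exp (B * ((n:ℝ)+1) - (n:ℝ) ^ α / M)
        = Real.exp (-((n:ℝ) ^ α) / M) * (2 * (A * Real.exp (B * ((n:ℝ)+1))))
    have h : Real.exp (B * ((n:ℝ)+1) - (n:ℝ) ^ α / M)
        = Real.exp (-((n:ℝ) ^ α) / M) * Real.exp (B * ((n:ℝ)+1)) := by
      rw [← Real.exp_add]; congr 1; ring
    rw [h]; ring
  set S : ℝ := ∑' n, c n with hSdef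
  have hS0 : 0 ≤ S := tsum_nonneg hcnn
  refine ⟨C₁ * D₁ * (S + 1), by positivity, fun y z => ?_⟩
  -- the auxiliary integral bound
  set g : X → ℝ := fun w => min (dist y w) (dist w z) with hgdef
  have hg0 : ∀ w, 0 ≤ g w := fun w => le_min dist_nonneg dist_nonneg
  have haux : ∫⁻ w, ENNReal.ofReal (Real.exp (-(g w ^ α) / M)) ∂μ ≤ ENNReal.ofReal S := by
    set Sn : ℕ → Set X := fun n => {w | (n:ℝ) ≤ g w ∧ g w < (n:ℝ)+1} with hSndef
    have hcover : (Set.univ : Set X) = ⋃ n, Sn n := by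
      ext w
      simp only [Set.mem_iUnion, Set.mem_univ, true_iff, hSndef, Set.mem_setOf_eq]
      exact ⟨⌊g w⌋₊, Nat.floor_le (hg0 w), Nat.lt_floor_add_one _⟩
    calc ∫⁻ w, ENNReal.ofReal (Real.exp (-(g w ^ α) / M)) ∂μ
        = ∫⁻ w in ⋃ n, Sn n, ENNReal.ofReal (Real.exp (-(g w ^ α) / M)) ∂μ := by
          rw [← hcover, Measure.restrict_univ]
      _ ≤ ∑' n, ∫⁻ w in Sn n, ENNReal.ofReal (Real.exp (-(g w ^ α) / M)) ∂μ :=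
          lintegral_iUnion_le _ _
      _ ≤ ∑' n, ENNReal.ofReal (c n) := by
          refine ENNReal.tsum_le_tsum fun n => ?_
          have hstep : ∫⁻ w in Sn n, ENNReal.ofReal (Real.exp (-(g w ^ α) / M)) ∂μ
              ≤ ENNReal.ofReal (Real.exp (-((n:ℝ) ^ α) / M)) * μ (Sn n) := by
            rw [← setLIntegral_const]
            refine setLIntegral_mono measurable_const fun w hw => ?_
            apply ENNReal.ofReal_le_ofReal
            apply Real.exp_le_exp.mpr
            rw [neg_div, neg_div, neg_le_neg_iff]
            have hpow : (n:ℝ) ^ α ≤ g w ^ α :=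
              Real.rpow_le_rpow (x := (n:ℝ)) (y := g w) (z := α) n.cast_nonneg hw.1
                (by linarith)
            exact div_le_div_of_nonneg_right hpow hM.le
          refine hstep.trans ?_
          have hμ : μ (Sn n) ≤ ENNReal.ofReal (2 * (A * Real.exp (B * ((n:ℝ)+1)))) := by
            have hsub : Sn n ⊆ Metric.closedBall y ((n:ℝ)+1) ∪ Metric.closedBall z ((n:ℝ)+1) := by
              intro w hw
              rcases le_total (dist y w) (dist w z) with h | h
              · left
                rw [Metric.mem_closedBall, dist_comm]
                have hmin : g w = dist y w := min_eq_left h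
                have h2 := hw.2
                linarith
              · right
                rw [Metric.mem_closedBall]
                have hmin : g w = dist w z := min_eq_right h
                have h2 := hw.2
                linarith
            calc μ (Sn n) ≤ μ (Metric.closedBall y ((n:ℝ)+1) ∪ Metric.closedBall z ((n:ℝ)+1)) :=
                  measure_mono hsub
              _ ≤ μ (Metric.closedBall y ((n:ℝ)+1)) + μ (Metric.closedBall z ((n:ℝ)+1)) :=
                  measure_union_le _ _
              _ ≤ ENNReal.ofReal (A * Real.exp (B * ((n:ℝ)+1)))
                  + ENNReal.ofReal (A * Real.exp (B * ((n:ℝ)+1))) :=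
                  add_le_add (hgrowth y _ (by positivity)) (hgrowth z _ (by positivity))
              _ = ENNReal.ofReal (2 * (A * Real.exp (B * ((n:ℝ)+1)))) := by
                  rw [← ENNReal.ofReal_add (by positivity) (by positivity)]; ring_nf
          calc ENNReal.ofReal (Real.exp (-((n:ℝ) ^ α) / M)) * μ (Sn n)
              ≤ ENNReal.ofReal (Real.exp (-((n:ℝ) ^ α) / M))
                * ENNReal.ofReal (2 * (A * Real.exp (B * ((n:ℝ)+1)))) :=
                mul_le_mul_right hμ _
            _ = ENNReal.ofReal (c n) := by
                rw [← ENNReal.ofReal_mul (Real.exp_pos _).le]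
      _ = ENNReal.ofReal S := (ENNReal.ofReal_tsum_of_nonneg hcnn hcsum).symm
  -- pointwise bound
  have hpt : ∀ w, ENNReal.ofReal (‖K₁ (y, w)‖ * ‖K₂ (w, z)‖)
      ≤ ENNReal.ofReal (C₁ * D₁ * Real.exp (-(dist y z ^ α) / ((2:ℝ) ^ α * M)))
        * ENNReal.ofReal (Real.exp (-(g w ^ α) / M)) := by
    intro w
    rw [← ENNReal.ofReal_mul (by positivity)]
    apply ENNReal.ofReal_le_ofReal
    have h1 := hbd₁ y w
    have h2 := hbd₂ w z
    have hK1nn := norm_nonneg (K₁ (y, w))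
    have hK2nn := norm_nonneg (K₂ (w, z))
    calc ‖K₁ (y, w)‖ * ‖K₂ (w, z)‖
        ≤ (C₁ * Real.exp (-(dist y w ^ α) / C₂)) * (D₁ * Real.exp (-(dist w z ^ α) / D₂)) :=
          mul_le_mul h1 h2 hK2nn (by positivity)
      _ = C₁ * D₁ * Real.exp (-(dist y w ^ α) / C₂ + -(dist w z ^ α) / D₂) := by
          rw [Real.exp_add]; ring
      _ ≤ C₁ * D₁ * Real.exp (-(dist y z ^ α) / ((2:ℝ) ^ α * M) + -(g w ^ α) / M) := by
          apply mul_le_mul_of_nonneg_left _ (by positivity)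
          apply Real.exp_le_exp.mpr
          simp only [hgdef, hMdef]
          have hkey := aux_key_ineq (α := α) (C₂ := C₂) (D₂ := D₂)
            (d1 := dist y w) (d2 := dist w z) (d := dist y z)
            (le_of_lt hα) hC₂ hD₂ dist_nonneg dist_nonneg
            dist_nonneg (dist_triangle y w z)
          simp only [neg_div]
          linarith [hkey]
      _ = C₁ * D₁ * Real.exp (-(dist y z ^ α) / ((2:ℝ) ^ α * M)) * Real.exp (-(g w ^ α) / M) := by
          rw [Real.exp_add]; ring
  calc ∫⁻ w, ENNReal.ofReal (‖K₁ (y, w)‖ * ‖K₂ (w, z)‖) ∂μ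
      ≤ ∫⁻ w, ENNReal.ofReal (C₁ * D₁ * Real.exp (-(dist y z ^ α) / ((2:ℝ) ^ α * M)))
          * ENNReal.ofReal (Real.exp (-(g w ^ α) / M)) ∂μ := lintegral_mono hpt
    _ = ENNReal.ofReal (C₁ * D₁ * Real.exp (-(dist y z ^ α) / ((2:ℝ) ^ α * M)))
          * ∫⁻ w, ENNReal.ofReal (Real.exp (-(g w ^ α) / M)) ∂μ :=
        lintegral_const_mul' _ _ ENNReal.ofReal_ne_top
    _ ≤ ENNReal.ofReal (C₁ * D₁ * Real.exp (-(dist y z ^ α) / ((2:ℝ) ^ α * M)))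
          * ENNReal.ofReal S := mul_le_mul_right haux _
    _ ≤ ENNReal.ofReal (C₁ * D₁ * (S + 1) * Real.exp (-(dist y z ^ α) / ((2:ℝ) ^ α * M))) := by
        rw [← ENNReal.ofReal_mul (by positivity)]
        apply ENNReal.ofReal_le_ofReal
        have he : (0:ℝ) < Real.exp (-(dist y z ^ α) / ((2:ℝ) ^ α * M)) := Real.exp_pos _
        nlinarith [mul_pos (mul_pos hC₁ hD₁) he]
end

section
/- Let A be a unital Banach algebra over ℝ and let T, T' ∈ A. Set a := T'·T, b := T·T', and g := ∫_0^1 exp(−s·a) ds. Then the 2×2 matrix W over A with entries W₁₁ = exp(−a), W₁₂ = −exp(−(1/2)·a)·g·T', W₂₁ = −exp(−(1/2)·b)·T, W₂₂ = 1 − exp(−b), is an idempotent: W·W = W in the matrix ring M₂(A). -/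
/-!
Put `e = exp(-a/2)` and `f = exp(-b/2)`, so that `exp(-a) = e²` and `exp(-b) = f²`. From
`T a = b T` and `T' b = a T'` the exponential series and the integral defining `g` intertwine:
`T e = f T`, `T' f = e T'`, `g e = e g`, and `T g = g_b T` with `g_b = ∫₀¹ exp(-s b) ds`. The
fundamental theorem of calculus gives `g a = 1 - e²` and `g_b b = 1 - f²`, hence
`T g T' = 1 - f²`. Moving `e` and `f` to the left through `T`, `T'`, `g` and substituting these
two identities turns every entry of `W * W - W` into a trivial additive identity.
-/

open MeasureTheory intervalIntegral

theorem isIdempotentElem_heat_matrix {R : Type*} [Ring R] {T T' e f g : R}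
    (hTe : SemiconjBy T e f) (hT'f : SemiconjBy T' f e) (hge : Commute g e)
    (hg : g * (T' * T) = 1 - e * e) (hTgT' : T * (g * T') = 1 - f * f) :
    IsIdempotentElem !![e * e, -(e * g * T'); -(f * T), 1 - f * f] := by
  have hTe' (x : R) : T * (e * x) = f * (T * x) := by rw [← mul_assoc, hTe.eq, mul_assoc]
  have hT'f' (x : R) : T' * (f * x) = e * (T' * x) := by rw [← mul_assoc, hT'f.eq, mul_assoc]
  have hge' (x : R) : g * (e * x) = e * (g * x) := by rw [← mul_assoc, hge.eq, mul_assoc]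
  rw [IsIdempotentElem, Matrix.mul_fin_two]
  simp only [neg_mul, mul_neg, neg_neg, mul_sub, sub_mul, mul_one, one_mul, mul_assoc,
      hTe', hT'f', hge', hTe.eq, hT'f.eq, hg, hTgT']
  abel_nf

section

variable {A : Type*} [NormedRing A] [NormedAlgebra ℝ A] [CompleteSpace A]

theorem intervalIntegral.integral_const_mul_of_intervalIntegrable {f : ℝ → A} {a b : ℝ}
    {μ : Measure ℝ} (hf : IntervalIntegrable f μ a b) (c : A) :
    ∫ s in a..b, c * f s ∂μ = c * ∫ s in a..b, f s ∂μ :=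
  (ContinuousLinearMap.mul ℝ A c).intervalIntegral_comp_comm hf

theorem intervalIntegral.integral_mul_const_of_intervalIntegrable {f : ℝ → A} {a b : ℝ}
    {μ : Measure ℝ} (hf : IntervalIntegrable f μ a b) (c : A) :
    ∫ s in a..b, f s * c ∂μ = (∫ s in a..b, f s ∂μ) * c :=
  ((ContinuousLinearMap.mul ℝ A).flip c).intervalIntegral_comp_comm hf

theorem SemiconjBy.intervalIntegral {c : A} {f g : ℝ → A} {a b : ℝ} {μ : Measure ℝ}
    (hf : IntervalIntegrable f μ a b) (hg : IntervalIntegrable g μ a b)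
    (h : ∀ s ∈ Set.uIcc a b, SemiconjBy c (f s) (g s)) :
    SemiconjBy c (∫ s in a..b, f s ∂μ) (∫ s in a..b, g s ∂μ) := by
  rw [SemiconjBy, ← integral_const_mul_of_intervalIntegrable hf,
    ← integral_mul_const_of_intervalIntegrable hg]
  exact integral_congr h

theorem continuous_exp_neg_smul (x : A) :
    Continuous fun s : ℝ => NormedSpace.exp (-(s • x)) := by
  let _ : NormedAlgebra ℚ A := .restrictScalars ℚ ℝ A
  fun_prop

theorem SemiconjBy.exp_neg_smul {c x y : A} (h : SemiconjBy c x y) (s : ℝ) :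
    SemiconjBy c (NormedSpace.exp (-(s • x))) (NormedSpace.exp (-(s • y))) := by
  let _ : NormedAlgebra ℚ A := .restrictScalars ℚ ℝ A
  exact (h.smul_right s).neg_right.exp_right

theorem SemiconjBy.integral_exp_neg_smul {c x y : A} (h : SemiconjBy c x y) (a b : ℝ) :
    SemiconjBy c (∫ s in a..b, NormedSpace.exp (-(s • x)))
      (∫ s in a..b, NormedSpace.exp (-(s • y))) :=
  .intervalIntegral ((continuous_exp_neg_smul x).intervalIntegrable a b)
    ((continuous_exp_neg_smul y).intervalIntegrable a b) fun s _ => h.exp_neg_smul s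

theorem integral_exp_neg_smul_mul (x : A) :
    (∫ s in (0 : ℝ)..1, NormedSpace.exp (-(s • x))) * x = 1 - NormedSpace.exp (-x) := by
  have hderiv (s : ℝ) : HasDerivAt (fun s : ℝ => NormedSpace.exp (-(s • x)))
      (-(NormedSpace.exp (-(s • x)) * x)) s := by
    simpa only [smul_neg, mul_neg] using hasDerivAt_exp_smul_const (-x) s
  have hint := (continuous_exp_neg_smul x).intervalIntegrable (μ := volume) 0 1
  have hftc := integral_eq_sub_of_hasDerivAt (fun s _ => hderiv s) (hint.mul_const x).neg
  rw [← integral_mul_const_of_intervalIntegrable hint, ← neg_neg (∫ _ in _.._, _),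
    ← intervalIntegral.integral_neg, hftc]
  simp

theorem exp_half_smul_mul_self (x : A) :
    NormedSpace.exp ((1 / 2 : ℝ) • x) * NormedSpace.exp ((1 / 2 : ℝ) • x) =
      NormedSpace.exp x := by
  let _ : NormedAlgebra ℚ A := .restrictScalars ℚ ℝ A
  rw [← NormedSpace.exp_add_of_commute (Commute.refl _), ← add_smul]
  norm_num

end

/-- The Wassermann-type heat idempotent: in a unital real Banach algebra `A`, for
`T T' : A`, with `a = T'·T`, `b = T·T'` and `g = ∫₀¹ exp(−s·a) ds`, the 2×2 matrix
`W = [[exp(−a), −exp(−a/2)·g·T'], [−exp(−b/2)·T, 1 − exp(−b)]]` satisfies `W·W = W`. -/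
theorem heat_matrix_idempotent {A : Type*} [NormedRing A] [NormedAlgebra ℝ A]
    [CompleteSpace A] (T T' : A) :
    let a := T' * T
    let b := T * T'
    let g := ∫ s in (0 : ℝ)..1, NormedSpace.exp (-(s • a))
    let W : Matrix (Fin 2) (Fin 2) A :=
      !![NormedSpace.exp (-a), -(NormedSpace.exp (-((1 / 2 : ℝ) • a)) * g * T');
         -(NormedSpace.exp (-((1 / 2 : ℝ) • b)) * T), 1 - NormedSpace.exp (-b)]
    W * W = W := by
  intro a b g W
  set e := NormedSpace.exp (-((1 / 2 : ℝ) • a))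
  set f := NormedSpace.exp (-((1 / 2 : ℝ) • b))
  have he : NormedSpace.exp (-a) = e * e := by
    simpa only [smul_neg] using (exp_half_smul_mul_self (-a)).symm
  have hf : NormedSpace.exp (-b) = f * f := by
    simpa only [smul_neg] using (exp_half_smul_mul_self (-b)).symm
  have hab : SemiconjBy T a b := (mul_assoc T T' T).symm
  have hba : SemiconjBy T' b a := (mul_assoc T' T T').symm
  have hge : Commute g e :=
    .symm <| SemiconjBy.integral_exp_neg_smul ((Commute.refl a).exp_neg_smul _).symm 0 1
  have hg : g * a = 1 - e * e := by rw [integral_exp_neg_smul_mul, he]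
  have hTgT' : T * (g * T') = 1 - f * f := by
    rw [← mul_assoc, (hab.integral_exp_neg_smul 0 1).eq, mul_assoc, integral_exp_neg_smul_mul,
      hf]
  have hW : W = !![e * e, -(e * g * T'); -(f * T), 1 - f * f] := by
    rw [← he, ← hf]
  rw [hW]
  exact isIdempotentElem_heat_matrix (hab.exp_neg_smul _) (hba.exp_neg_smul _) hge hg hTgT'
end

section
/- Let R be a ring, p ∈ R an idempotent (p² = p), and b ∈ R arbitrary. Then for every integer k ≥ 1: (p·b·p)^{2k} = p·((b·p − p·b)² + p·b²·p)^k. -/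
/-- Powers of the index-bundle curvature: in a ring `R`, for an idempotent `p` and
arbitrary `b`, `(p·b·p)^{2k} = p·((b·p − p·b)² + p·b²·p)^k` for every `k ≥ 1`. -/
theorem idempotent_curvature_pow {R : Type*} [Ring R] (p b : R) (hp : p * p = p) :
    ∀ k : ℕ, 1 ≤ k → (p * b * p) ^ (2 * k) = p * ((b * p - p * b) ^ 2 + p * b ^ 2 * p) ^ k := by
  have hpp : ∀ x : R, p * (p * x) = p * x := fun x => by rw [← mul_assoc, hp]
  set X : R := (b * p - p * b) ^ 2 + p * b ^ 2 * p with hX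
  have base : p * X = p * b * p * (p * b * p) := by
    simp only [hX, pow_two, mul_sub, sub_mul, mul_add, add_mul, mul_assoc, hpp, hp]
    abel
  have habs : ∀ n : ℕ, 1 ≤ n → p * (p * b * p) ^ n = (p * b * p) ^ n := by
    intro n hn
    obtain ⟨m, rfl⟩ := Nat.exists_eq_add_of_le hn
    rw [add_comm, pow_succ', show p * b * p = p * (b * p) from by rw [mul_assoc]]
    simp only [mul_assoc, hpp]
  have key : ∀ k : ℕ, 1 ≤ k → p * X ^ k = (p * b * p) ^ (2 * k) := by
    refine Nat.le_induction ?_ ?_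
    · rw [pow_one, base, show (2 : ℕ) * 1 = 2 from rfl, pow_two]
    · intro k hk ih
      calc p * X ^ (k + 1) = p * X * X ^ k := by rw [pow_succ', mul_assoc]
        _ = p * b * p * (p * b) * (p * X ^ k) := by rw [base]; simp only [mul_assoc]
        _ = p * b * p * (p * b) * (p * (p * b * p) ^ (2 * k)) := by rw [ih, habs (2 * k) (by omega)]
        _ = (p * b * p * (p * b * p)) * (p * b * p) ^ (2 * k) := by simp only [mul_assoc]
        _ = (p * b * p) ^ (2 * (k + 1)) := by
            rw [show 2 * (k + 1) = 2 + 2 * k from by ring, pow_add, pow_two]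
  intro k hk
  exact (key k hk).symm
end
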